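/- Let c : I → H be a C² curve on anti-de Sitter space H and λ : I → ℝ a C¹ function satisfying the Euler–Lagrange system ẍ₁ = λ̇x₄ + 2λẋ₄, ẍ₂ = −λ̇x₃ − 2λẋ₃, ẍ₃ = −λ̇x₂ − 2λẋ₂, ẍ₄ = λ̇x₁ + 2λẋ₁. If c is horizontal with respect to span{T,X} (γ ≡ 0), then the Lagrange multiplier λ is constant on I. -/

import Mathlib

open Real Set

noncomputable section

/-- Pseudo-Euclidean inner product of signature (2,2) on ℝ⁴. -/
def ip (x y : Fin 4 → ℝ) : ℝ :=
  -(x 0 * y 0) - x 1 * y 1 + x 2 * y 2 + x 3 * y 3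

/-- Anti-de Sitter space H = {x : ⟨x,x⟩ = -1}. -/
def AdS : Set (Fin 4 → ℝ) := {x | ip x x = -1}

/-- The vector field T(x) = (−x₂, x₁, x₄, −x₃). -/
def Tf (x : Fin 4 → ℝ) : Fin 4 → ℝ := ![-(x 1), x 0, x 3, -(x 2)]

/-- The vector field X(x) = (x₃, x₄, x₁, x₂). -/
def Xf (x : Fin 4 → ℝ) : Fin 4 → ℝ := ![x 2, x 3, x 0, x 1]

/-- The vector field Y(x) = (x₄, −x₃, −x₂, x₁). -/
def Yf (x : Fin 4 → ℝ) : Fin 4 → ℝ := ![x 3, -(x 2), -(x 1), x 0]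

/-- The normal vector field N(x) = x. -/
def Nf (x : Fin 4 → ℝ) : Fin 4 → ℝ := x

/-- α(s) = ⟨ċ(s), T(c(s))⟩. -/
def alphaC (c : ℝ → Fin 4 → ℝ) (s : ℝ) : ℝ := ip (deriv c s) (Tf (c s))

/-- β(s) = ⟨ċ(s), X(c(s))⟩. -/
def betaC (c : ℝ → Fin 4 → ℝ) (s : ℝ) : ℝ := ip (deriv c s) (Xf (c s))

/-- γ(s) = ⟨ċ(s), Y(c(s))⟩. -/
def gammaC (c : ℝ → Fin 4 → ℝ) (s : ℝ) : ℝ := ip (deriv c s) (Yf (c s))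

/-!
Along the curve, `γ̇ = ⟨c̈, Y c⟩ + ⟨ċ, Y ċ⟩`, and the second term vanishes because `Y` is
skew for `⟨·,·⟩`. The Euler–Lagrange system says exactly `c̈ = λ̇ Y c + 2λ Y ċ`, and `Y` is an
anti-isometry, so `⟨c̈, Y c⟩ = -λ̇ ⟨c, c⟩ - 2λ ⟨ċ, c⟩ = λ̇`: the first term by `⟨c, c⟩ = -1`, the
second because differentiating `⟨c, c⟩ = -1` gives `⟨ċ, c⟩ = 0`. Hence `λ̇ = γ̇ = 0`.
-/

lemma ip_comm (x y : Fin 4 → ℝ) : ip x y = ip y x := by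
  simp only [ip]; ring

lemma ip_smul_add_smul_left (a b : ℝ) (x y z : Fin 4 → ℝ) :
    ip (a • x + b • y) z = a * ip x z + b * ip y z := by
  simp only [ip, Pi.add_apply, Pi.smul_apply, smul_eq_mul]; ring

lemma ip_self_Yf (x : Fin 4 → ℝ) : ip x (Yf x) = 0 := by
  simp only [ip, Yf, Matrix.cons_val]; ring

lemma ip_Yf_Yf (x y : Fin 4 → ℝ) : ip (Yf x) (Yf y) = -ip x y := by
  simp only [ip, Yf, Matrix.cons_val]; ring

section Curves

variable {c d : ℝ → Fin 4 → ℝ} {c' d' : Fin 4 → ℝ} {s : ℝ}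

lemma HasDerivAt.ip (hc : HasDerivAt c c' s) (hd : HasDerivAt d d' s) :
    HasDerivAt (fun u => _root_.ip (c u) (d u)) (_root_.ip c' (d s) + _root_.ip (c s) d') s := by
  have hci := hasDerivAt_pi.1 hc
  have hdi := hasDerivAt_pi.1 hd
  refine (((((hci 0).mul (hdi 0)).neg.sub ((hci 1).mul (hdi 1))).add
    ((hci 2).mul (hdi 2))).add ((hci 3).mul (hdi 3))).congr_deriv ?_
  simp only [_root_.ip]; ring

lemma HasDerivAt.Yf (hc : HasDerivAt c c' s) : HasDerivAt (fun u => Yf (c u)) (Yf c') s := by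
  have hci := hasDerivAt_pi.1 hc
  refine hasDerivAt_pi.2 fun i => ?_
  fin_cases i
  exacts [hci 3, (hci 2).neg, (hci 1).neg, hci 0]

lemma HasDerivAt.ip_self (hc : HasDerivAt c c' s) :
    HasDerivAt (fun u => _root_.ip (c u) (c u)) (2 * _root_.ip c' (c s)) s := by
  convert hc.ip hc using 1
  rw [ip_comm (c s)]; ring

lemma hasDerivAt_gammaC (hc : DifferentiableAt ℝ c s) (hc' : DifferentiableAt ℝ (deriv c) s) :
    HasDerivAt (gammaC c) (ip (deriv (deriv c) s) (Yf (c s))) s := by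
  have := hc'.hasDerivAt.ip hc.hasDerivAt.Yf
  rwa [ip_self_Yf, add_zero] at this

end Curves

lemma HasDerivAt.eq_zero_of_eqOn {f : ℝ → ℝ} {f' k x : ℝ} {J : Set ℝ}
    (hJ : UniqueDiffWithinAt ℝ J x) (hx : x ∈ J) (hf : HasDerivAt f f' x)
    (hk : ∀ y ∈ J, f y = k) : f' = 0 :=
  hJ.eq_deriv J hf.hasDerivWithinAt ((hasDerivWithinAt_const x J k).congr_of_mem hk hx)

lemma deriv_deriv_eq_of_eulerLagrange {c : ℝ → Fin 4 → ℝ} {lam : ℝ → ℝ} {s : ℝ}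
    (h1 : deriv (deriv c) s 0 = deriv lam s * c s 3 + 2 * lam s * deriv c s 3)
    (h2 : deriv (deriv c) s 1 = -(deriv lam s * c s 2) - 2 * lam s * deriv c s 2)
    (h3 : deriv (deriv c) s 2 = -(deriv lam s * c s 1) - 2 * lam s * deriv c s 1)
    (h4 : deriv (deriv c) s 3 = deriv lam s * c s 0 + 2 * lam s * deriv c s 0) :
    deriv (deriv c) s = deriv lam s • Yf (c s) + (2 * lam s) • Yf (deriv c s) := by
  funext i
  fin_cases i <;> simp [Yf, h1, h2, h3, h4] <;> ring

lemma deriv_eq_zero_of_horizontal {c : ℝ → Fin 4 → ℝ} {lam : ℝ → ℝ} {J : Set ℝ} {x : ℝ}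
    (hJ : UniqueDiffWithinAt ℝ J x) (hx : x ∈ J)
    (hc1 : DifferentiableAt ℝ c x) (hc2 : DifferentiableAt ℝ (deriv c) x)
    (hH : ∀ y ∈ J, c y ∈ AdS) (hhor : ∀ y ∈ J, gammaC c y = 0)
    (hEL : deriv (deriv c) x = deriv lam x • Yf (c x) + (2 * lam x) • Yf (deriv c x)) :
    deriv lam x = 0 := by
  have hcc : ip (c x) (c x) = -1 := hH x hx
  have hdc : ip (deriv c x) (c x) = 0 := by
    have := hc1.hasDerivAt.ip_self.eq_zero_of_eqOn hJ hx hH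
    linarith
  have hγ := (hasDerivAt_gammaC hc1 hc2).eq_zero_of_eqOn hJ hx hhor
  rw [hEL, ip_smul_add_smul_left, ip_Yf_Yf, ip_Yf_Yf, hcc, hdc] at hγ
  linarith

/-- along a C² horizontal (span{T,X}) solution on AdS of the
Euler–Lagrange system, the Lagrange multiplier λ is constant on I. -/
theorem lagrange_multiplier_constant (I : Set ℝ) (hI : I.OrdConnected)
    (c : ℝ → Fin 4 → ℝ) (lam : ℝ → ℝ)
    (hc1 : ∀ s ∈ I, DifferentiableAt ℝ c s)
    (hc2 : ∀ s ∈ I, DifferentiableAt ℝ (deriv c) s)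
    (hlam : ∀ s ∈ I, DifferentiableAt ℝ lam s)
    (hH : ∀ s ∈ I, c s ∈ AdS)
    (hhor : ∀ s ∈ I, gammaC c s = 0)
    (hEL1 : ∀ s ∈ I, deriv (deriv c) s 0
      = deriv lam s * c s 3 + 2 * lam s * deriv c s 3)
    (hEL2 : ∀ s ∈ I, deriv (deriv c) s 1
      = -(deriv lam s * c s 2) - 2 * lam s * deriv c s 2)
    (hEL3 : ∀ s ∈ I, deriv (deriv c) s 2
      = -(deriv lam s * c s 1) - 2 * lam s * deriv c s 1)
    (hEL4 : ∀ s ∈ I, deriv (deriv c) s 3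
      = deriv lam s * c s 0 + 2 * lam s * deriv c s 0) :
    ∀ s ∈ I, ∀ t ∈ I, lam s = lam t := by
  suffices key : ∀ s ∈ I, ∀ t ∈ I, s < t → lam t = lam s by
    intro s hs t ht
    rcases lt_trichotomy s t with h | rfl | h
    exacts [(key s hs t ht h).symm, rfl, key t ht s hs h]
  intro s hs t ht hst
  have hsub : Icc s t ⊆ I := hI.out hs ht
  have hzero : ∀ x ∈ Icc s t, HasDerivAt lam 0 x := fun x hx => by
    have hxI := hsub hx
    have hlam' : deriv lam x = 0 :=
      deriv_eq_zero_of_horizontal (uniqueDiffOn_Icc hst x hx) hx (hc1 x hxI) (hc2 x hxI)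
        (fun y hy => hH y (hsub hy)) (fun y hy => hhor y (hsub hy))
        (deriv_deriv_eq_of_eulerLagrange (hEL1 x hxI) (hEL2 x hxI) (hEL3 x hxI) (hEL4 x hxI))
    simpa only [hlam'] using (hlam x hxI).hasDerivAt
  exact constant_of_has_deriv_right_zero (fun x hx => (hzero x hx).continuousAt.continuousWithinAt)
    (fun x hx => (hzero x (Ico_subset_Icc_self hx)).hasDerivWithinAt) t (right_mem_Icc.2 hst.le)
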